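/- arXiv:2403.13406 — 8 statements merged into one kernel-verified Lean document; each statement's English description precedes it below -/
import Mathlib

section
/- For a real number α, the equation 8α³ + (1 − 8α)³ = 0 holds if and only if α = 1/6. Consequently, with n = 4, the pair (α, β) = (1/6, −1/3) is the unique real solution of the fourth-order conditions 2nα + β = 1 and 2nα³ + β³ = 0. -/
/-- For a real `α`, `8α³ + (1 − 8α)³ = 0` iff `α = 1/6`; consequently, with `n = 4`,
`(α, β) = (1/6, −1/3)` is the unique real solution of the fourth-order conditions
`2nα + β = 1` and `2nα³ + β³ = 0`. -/
theorem fourth_order_conditions_n_four :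
    (∀ α : ℝ, 8 * α ^ 3 + (1 - 8 * α) ^ 3 = 0 ↔ α = 1 / 6) ∧
    (∀ α β : ℝ,
      (2 * 4 * α + β = 1 ∧ 2 * 4 * α ^ 3 + β ^ 3 = 0) ↔ (α = 1 / 6 ∧ β = -(1 / 3))) := by
  have key : ∀ α : ℝ, 8 * α ^ 3 + (1 - 8 * α) ^ 3 = 0 ↔ α = 1 / 6 := by
    intro α
    constructor
    · intro h
      nlinarith [sq_nonneg (α - 3/28), sq_nonneg α, sq_nonneg (6*α - 1)]
    · rintro rfl; ring
  refine ⟨key, fun α β => ?_⟩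
  constructor
  · rintro ⟨h1, h2⟩
    have hβ : β = 1 - 8 * α := by linarith
    subst hβ
    have hα : α = 1 / 6 := (key α).mp (by linarith)
    exact ⟨hα, by rw [hα]; norm_num⟩
  · rintro ⟨rfl, rfl⟩; norm_num
end

section
/- Let n ≥ 1 be a natural number and α, β real numbers satisfying 2nα + β = 1 and 2nα³ + β³ = 0. Then α < 0 or β < 0; i.e., to fulfill the fourth-order composition conditions, either α or β has to be negative, so the composed scheme necessarily includes steps backward in time. -/
/-- If `n ≥ 1` and the real numbers `α, β` satisfy the fourth-order composition
conditions `2nα + β = 1` and `2nα³ + β³ = 0`, then `α < 0` or `β < 0`: the composed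
scheme necessarily includes steps backward in time. -/
theorem backward_step_necessary (n : ℕ) (hn : 1 ≤ n) (α β : ℝ)
    (h1 : 2 * (n : ℝ) * α + β = 1) (h2 : 2 * (n : ℝ) * α ^ 3 + β ^ 3 = 0) :
    α < 0 ∨ β < 0 := by
  by_contra h
  push_neg at h
  obtain ⟨ha, hb⟩ := h
  have hn' : (1:ℝ) ≤ n := by exact_mod_cast hn
  have hna : 0 ≤ 2 * (n:ℝ) * α ^ 3 :=
    mul_nonneg (by positivity) (pow_nonneg ha 3)
  have hb3 : β ^ 3 = 0 := le_antisymm (by linarith [pow_nonneg hb 3]) (pow_nonneg hb 3)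
  have hb0 : β = 0 := by
    have := pow_eq_zero_iff (n := 3) (by norm_num) |>.mp hb3
    exact this
  have ha3 : α ^ 3 = 0 := by
    have : 2 * (n:ℝ) * α ^ 3 = 0 := by linarith
    have h2n : (0:ℝ) < 2 * n := by positivity
    exact (mul_eq_zero.mp this).resolve_left (by positivity)
  have ha0 : α = 0 := pow_eq_zero_iff (n := 3) (by norm_num) |>.mp ha3
  rw [ha0, hb0] at h1
  simp at h1
end

section
/- Let E be a real vector space, q ≥ 1, and eq : E → (Fin q → E) satisfy Σ_k eq(u)(k) = u for every u ∈ E. For ω ∈ ℝ define R_ω(f)(k) = (1−ω)·f(k) + ω·eq(Σ_j f(j))(k). Then Σ_k R_ω(f)(k) = Σ_k f(k) for all f and ω; and for every ω ≠ 1, R_{ω/(ω−1)}(R_ω(f)) = f for all f. In particular, relaxing with rate ω and then with rate ω/(ω−1) returns the original distribution functions, which underlies the involution property of the entropy-adapted relaxation. -/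
/-! Relaxation is an affine interpolation between `f` and the equilibrium of its (conserved) sum,
so two relaxations compose into one, with the deviations from equilibrium scaled by
`(1 - ω') (1 - ω)`. Rate `ω / (ω - 1)` makes that product `1`, i.e. the composite rate `0`. -/

open Finset

section Relaxation

variable {E ι : Type*} [AddCommGroup E] [Module ℝ E] [Fintype ι]

def relax (eq : E → ι → E) (ω : ℝ) (f : ι → E) : ι → E :=
  fun k => (1 - ω) • f k + ω • eq (∑ j, f j) k

@[simp]
theorem relax_zero (eq : E → ι → E) (f : ι → E) : relax eq 0 f = f := by
  funext k
  simp [relax]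

variable {eq : E → ι → E} (heq : ∀ u, ∑ k, eq u k = u)
include heq

theorem sum_relax (ω : ℝ) (f : ι → E) : ∑ k, relax eq ω f k = ∑ k, f k := by
  simp only [relax, sum_add_distrib, ← smul_sum, heq]
  module

theorem relax_relax (ω ω' : ℝ) (f : ι → E) :
    relax eq ω' (relax eq ω f) = relax eq (ω + ω' - ω * ω') f := by
  funext k
  change (1 - ω') • relax eq ω f k + ω' • eq (∑ j, relax eq ω f j) k = _
  rw [sum_relax heq]
  simp only [relax]
  module

theorem relax_div_sub_one_relax {ω : ℝ} (hω : ω ≠ 1) (f : ι → E) :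
    relax eq (ω / (ω - 1)) (relax eq ω f) = f := by
  have hrate : ω + ω / (ω - 1) - ω * (ω / (ω - 1)) = 0 := by
    field_simp [sub_ne_zero.mpr hω]
    ring
  rw [relax_relax heq, hrate, relax_zero]

end Relaxation

theorem relaxation_conserves_and_inverse_general (E : Type*) [AddCommGroup E] [Module ℝ E]
    (q : ℕ)
    (eq : E → Fin q → E) (heq : ∀ u : E, ∑ k, eq u k = u)
    (R : ℝ → (Fin q → E) → Fin q → E)
    (hR : ∀ (ω : ℝ) (f : Fin q → E) (k : Fin q),
      R ω f k = (1 - ω) • f k + ω • eq (∑ j, f j) k) :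
    (∀ (ω : ℝ) (f : Fin q → E), ∑ k, R ω f k = ∑ k, f k) ∧
    (∀ ω : ℝ, ω ≠ 1 → ∀ f : Fin q → E, R (ω / (ω - 1)) (R ω f) = f) := by
  obtain rfl : R = relax eq := by
    funext ω f k
    exact hR ω f k
  exact ⟨sum_relax heq, fun ω hω => relax_div_sub_one_relax heq hω⟩

/-- The relaxation with rate `ω`, `R_ω(f)ₖ = (1−ω) fₖ + ω eqₖ(Σⱼ fⱼ)`, conserves
the sum of the distribution functions; moreover, for `ω ≠ 1`, relaxing with rate `ω`
and then with rate `ω/(ω−1)` returns the original distribution functions. -/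
theorem relaxation_conserves_and_inverse (E : Type*) [AddCommGroup E] [Module ℝ E]
    (q : ℕ) (hq : 1 ≤ q)
    (eq : E → Fin q → E) (heq : ∀ u : E, ∑ k, eq u k = u)
    (R : ℝ → (Fin q → E) → Fin q → E)
    (hR : ∀ (ω : ℝ) (f : Fin q → E) (k : Fin q),
      R ω f k = (1 - ω) • f k + ω • eq (∑ j, f j) k) :
    (∀ (ω : ℝ) (f : Fin q → E), ∑ k, R ω f k = ∑ k, f k) ∧
    (∀ ω : ℝ, ω ≠ 1 → ∀ f : Fin q → E, R (ω / (ω - 1)) (R ω f) = f) :=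
  relaxation_conserves_and_inverse_general E q eq heq R hR
end

section
/- Let V > 0, a ∈ ℝ with |a| < V, and κ ≥ 1 an integer. Over ℂ, let R be the 2×2 matrix with rows (a/V, 1 + a/V) and (1 − a/V, −a/V), and for m ∈ ℤ and θ ∈ ℝ let D(m, θ) = diag(exp(−i m θ), exp(i m θ)). Define Ψ₊(θ) = D(κ,θ)·R·D(2κ,θ)·R·D(κ,θ), Ψ₋(θ) = D(−2κ,θ)·R·D(−4κ,θ)·R·D(−2κ,θ), and Φ(θ) = Ψ₊(θ)⁴·Ψ₋(θ)·Ψ₊(θ)⁴. Then the scheme is L²-stable: there exists a constant C such that ‖Φ(θ)ⁿ‖ ≤ C for every θ ∈ ℝ and every natural number n. -/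
attribute [local instance] Matrix.normedAddCommGroup

open Complex Matrix

set_option maxHeartbeats 1000000 in
/-- L² stability of the fourth-order D1Q2 scheme for linear transport under the
sub-characteristic condition `|a| < V`: the Fourier amplification matrix
`Φ(θ) = Ψ₊(θ)⁴ Ψ₋(θ) Ψ₊(θ)⁴`, with `Ψ₊(θ) = D(κ,θ) R D(2κ,θ) R D(κ,θ)` and
`Ψ₋(θ) = D(−2κ,θ) R D(−4κ,θ) R D(−2κ,θ)`, where `D(m,θ) = diag(e^{−imθ}, e^{imθ})`
is the transport symbol and `R` the `ω = 2` relaxation matrix, is uniformly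
power-bounded in `θ` and in the number of steps. -/
theorem fourth_order_scheme_L2_stable (V a : ℝ) (hV : 0 < V) (ha : |a| < V)
    (κ : ℕ) (hκ : 1 ≤ κ)
    (R : Matrix (Fin 2) (Fin 2) ℂ)
    (hR : R = !![(a / V : ℂ), 1 + (a / V : ℂ); 1 - (a / V : ℂ), -(a / V : ℂ)])
    (D : ℤ → ℝ → Matrix (Fin 2) (Fin 2) ℂ)
    (hD : ∀ (m : ℤ) (θ : ℝ),
      D m θ = !![Complex.exp (-(m : ℂ) * (θ : ℂ) * Complex.I), 0;
                 0, Complex.exp ((m : ℂ) * (θ : ℂ) * Complex.I)])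
    (Ψp Ψm Φ : ℝ → Matrix (Fin 2) (Fin 2) ℂ)
    (hΨp : ∀ θ : ℝ, Ψp θ = D (κ : ℤ) θ * R * D (2 * κ : ℤ) θ * R * D (κ : ℤ) θ)
    (hΨm : ∀ θ : ℝ, Ψm θ = D (-(2 * κ) : ℤ) θ * R * D (-(4 * κ) : ℤ) θ * R * D (-(2 * κ) : ℤ) θ)
    (hΦ : ∀ θ : ℝ, Φ θ = (Ψp θ) ^ 4 * Ψm θ * (Ψp θ) ^ 4) :
    ∃ C : ℝ, ∀ (θ : ℝ) (n : ℕ), ‖(Φ θ) ^ n‖ ≤ C := by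
  obtain ⟨r, hrdef⟩ : ∃ r : ℝ, a / V = r := ⟨_, rfl⟩
  have hV' : (V : ℝ) ≠ 0 := ne_of_gt hV
  have hr : |r| < 1 := by
    rw [← hrdef, abs_div, abs_of_pos hV]
    exact (div_lt_one hV).mpr ha
  obtain ⟨hrl, hrr⟩ := abs_lt.mp hr
  have h1 : (0:ℝ) < 1 - r := by linarith
  have h2 : (0:ℝ) < 1 + r := by linarith
  obtain ⟨s1, hs1def⟩ : ∃ s : ℝ, Real.sqrt (1 - r) = s := ⟨_, rfl⟩
  obtain ⟨s2, hs2def⟩ : ∃ s : ℝ, Real.sqrt (1 + r) = s := ⟨_, rfl⟩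
  have hs1 : 0 < s1 := hs1def ▸ Real.sqrt_pos.mpr h1
  have hs2 : 0 < s2 := hs2def ▸ Real.sqrt_pos.mpr h2
  have hs1sq : s1 ^ 2 = 1 - r := hs1def ▸ Real.sq_sqrt h1.le
  have hs2sq : s2 ^ 2 = 1 + r := hs2def ▸ Real.sq_sqrt h2.le
  have hs1c : (s1 : ℂ) ≠ 0 := Complex.ofReal_ne_zero.mpr hs1.ne'
  have hs2c : (s2 : ℂ) ≠ 0 := Complex.ofReal_ne_zero.mpr hs2.ne'
  have c1 : ((s1 : ℂ)) ^ 2 = 1 - (r : ℂ) := by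
    rw [← Complex.ofReal_pow, hs1sq]; push_cast; ring
  have c2 : ((s2 : ℂ)) ^ 2 = 1 + (r : ℂ) := by
    rw [← Complex.ofReal_pow, hs2sq]; push_cast; ring
  obtain ⟨S, hSdef⟩ : ∃ X : Matrix (Fin 2) (Fin 2) ℂ, X = !![(s1 : ℂ), 0; 0, (s2 : ℂ)] := ⟨_, rfl⟩
  -- old: set S : Matrix (Fin 2) (Fin 2) ℂ := !![(s1 : ℂ), 0; 0, (s2 : ℂ)] with hSdef
  set T : Matrix (Fin 2) (Fin 2) ℂ := !![((s1⁻¹ : ℝ) : ℂ), 0; 0, ((s2⁻¹ : ℝ) : ℂ)] with hTdef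
  have hST : S * T = 1 := by
    rw [hSdef, hTdef]
    ext i j
    fin_cases i <;> fin_cases j <;>
      simp [Matrix.mul_apply, Fin.sum_univ_two, Matrix.one_apply,
        mul_inv_cancel₀ hs1c, mul_inv_cancel₀ hs2c]
  have hTS : T * S = 1 := by
    rw [hSdef, hTdef]
    ext i j
    fin_cases i <;> fin_cases j <;>
      simp [Matrix.mul_apply, Fin.sum_univ_two, Matrix.one_apply,
        inv_mul_cancel₀ hs1c, inv_mul_cancel₀ hs2c]
  -- conjugation helpers
  have conjU : ∀ A B : Matrix (Fin 2) (Fin 2) ℂ,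
      S * A * T ∈ Matrix.unitaryGroup (Fin 2) ℂ →
      S * B * T ∈ Matrix.unitaryGroup (Fin 2) ℂ →
      S * (A * B) * T ∈ Matrix.unitaryGroup (Fin 2) ℂ := by
    intro A B hA hB
    have h : S * (A * B) * T = (S * A * T) * (S * B * T) := by
      simp only [Matrix.mul_assoc]
      rw [← Matrix.mul_assoc T S, hTS, Matrix.one_mul]
    rw [h]
    exact mul_mem hA hB
  have conjpow : ∀ (A : Matrix (Fin 2) (Fin 2) ℂ) (n : ℕ),
      S * A * T ∈ Matrix.unitaryGroup (Fin 2) ℂ →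
      S * A ^ n * T ∈ Matrix.unitaryGroup (Fin 2) ℂ := by
    intro A n hA
    induction n with
    | zero => simpa [hST] using one_mem (Matrix.unitaryGroup (Fin 2) ℂ)
    | succ k ih => rw [pow_succ]; exact conjU _ _ ih hA
  -- R rewritten with r
  have hrc : ((a : ℂ) / (V : ℂ)) = (r : ℂ) := by rw [← hrdef]; push_cast; ring
  have hR' : R = !![(r : ℂ), 1 + (r : ℂ); 1 - (r : ℂ), -(r : ℂ)] := by
    rw [hR, hrc]
  have hR'' : R = !![(r : ℂ), (s2 : ℂ) ^ 2; (s1 : ℂ) ^ 2, -(r : ℂ)] := by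
    rw [hR', ← c1, ← c2]
  set M : Matrix (Fin 2) (Fin 2) ℂ :=
    !![(r : ℂ), (s1 : ℂ) * (s2 : ℂ); (s1 : ℂ) * (s2 : ℂ), -(r : ℂ)] with hMdef
  -- the conjugated relaxation matrix
  have hSR : S * R = M * S := by
    rw [hR'', hSdef, hMdef]
    ext i j
    fin_cases i <;> fin_cases j <;>
      simp [Matrix.mul_apply, Fin.sum_univ_two] <;> ring
  have hM : S * R * T = M := by
    rw [hSR, Matrix.mul_assoc, hST, Matrix.mul_one]
  have key : (r : ℂ) * r + (s1 : ℂ) * s2 * ((s1 : ℂ) * s2) = 1 := by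
    linear_combination ((s2 : ℂ)) ^ 2 * c1 + (1 - (r : ℂ)) * c2
  have hMu : S * R * T ∈ Matrix.unitaryGroup (Fin 2) ℂ := by
    rw [Matrix.mem_unitaryGroup_iff, hM]
    have hstar : star M = M := by
      rw [hMdef]
      ext i j
      fin_cases i <;> fin_cases j <;>
        simp [Matrix.star_apply, Complex.star_def, Complex.conj_ofReal]
    rw [hstar, hMdef]
    ext i j
    fin_cases i <;> fin_cases j <;>
      simp [Matrix.mul_apply, Fin.sum_univ_two, Matrix.one_apply] <;>
      first | ring1 | linear_combination key | linear_combination -key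
  -- unitarity of the transport symbol
  have hDu : ∀ (m : ℤ) (θ : ℝ), D m θ ∈ Matrix.unitaryGroup (Fin 2) ℂ := by
    intro m θ
    have hexp : ∀ z : ℂ, Complex.exp z * Complex.exp (-z) = 1 := by
      intro z; rw [← Complex.exp_add]; simp
    rw [Matrix.mem_unitaryGroup_iff, hD]
    ext i j
    fin_cases i <;> fin_cases j <;>
      simp [Matrix.mul_apply, Fin.sum_univ_two, Matrix.star_apply, Matrix.one_apply,
        Complex.star_def, ← Complex.exp_conj, ← Complex.exp_add, Complex.conj_ofReal,
        _root_.map_mul, _root_.map_neg, Complex.conj_I]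
  -- S commutes with the diagonal transport symbol
  have hSDT : ∀ (m : ℤ) (θ : ℝ), S * D m θ * T = D m θ := by
    intro m θ
    rw [hD, hSdef, hTdef]
    ext i j
    fin_cases i <;> fin_cases j <;>
      simp [Matrix.mul_apply, Fin.sum_univ_two] <;>
      field_simp <;> ring
  have hDmem : ∀ (m : ℤ) (θ : ℝ), S * D m θ * T ∈ Matrix.unitaryGroup (Fin 2) ℂ := by
    intro m θ; rw [hSDT]; exact hDu m θ
  have hΨpu : ∀ θ : ℝ, S * Ψp θ * T ∈ Matrix.unitaryGroup (Fin 2) ℂ := by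
    intro θ
    rw [hΨp]
    exact conjU _ _ (conjU _ _ (conjU _ _ (conjU _ _ (hDmem _ _) hMu) (hDmem _ _)) hMu)
      (hDmem _ _)
  have hΨmu : ∀ θ : ℝ, S * Ψm θ * T ∈ Matrix.unitaryGroup (Fin 2) ℂ := by
    intro θ
    rw [hΨm]
    exact conjU _ _ (conjU _ _ (conjU _ _ (conjU _ _ (hDmem _ _) hMu) (hDmem _ _)) hMu)
      (hDmem _ _)
  have hΦu : ∀ θ : ℝ, S * Φ θ * T ∈ Matrix.unitaryGroup (Fin 2) ℂ := by
    intro θ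
    rw [hΦ]
    exact conjU _ _ (conjU _ _ (conjpow _ 4 (hΨpu θ)) (hΨmu θ)) (conjpow _ 4 (hΨpu θ))
  have cancel : ∀ X : Matrix (Fin 2) (Fin 2) ℂ, T * (S * X * T) * S = X := by
    intro X
    calc T * (S * X * T) * S = T * S * X * (T * S) := by simp only [Matrix.mul_assoc]
      _ = X := by rw [hTS, Matrix.one_mul, Matrix.mul_one]
  have hC : (0:ℝ) ≤ (s1⁻¹ + s2⁻¹) * (s1 + s2) := by positivity
  refine ⟨(s1⁻¹ + s2⁻¹) * (s1 + s2), ?_⟩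
  intro θ n
  have hW : S * (Φ θ) ^ n * T ∈ Matrix.unitaryGroup (Fin 2) ℂ := conjpow (Φ θ) n (hΦu θ)
  obtain ⟨W, hWdef⟩ : ∃ W, S * (Φ θ) ^ n * T = W := ⟨_, rfl⟩
  rw [hWdef] at hW
  have hrep : (Φ θ) ^ n = T * W * S := by rw [← hWdef, cancel]
  rw [hrep, Matrix.norm_le_iff hC]
  intro i j
  have hb : ∀ i j : Fin 2, ‖W i j‖ ≤ 1 := fun i j => entry_norm_bound_of_unitary hW i j
  have hbase : ∀ (u v : ℝ) (z : ℂ), u = s1⁻¹ ∨ u = s2⁻¹ → v = s1 ∨ v = s2 → ‖z‖ ≤ 1 →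
      ‖((u : ℝ) : ℂ) * z * ((v : ℝ) : ℂ)‖ ≤ (s1⁻¹ + s2⁻¹) * (s1 + s2) := by
    intro u v z hu hv hz
    have hu0 : 0 ≤ u := by rcases hu with h | h <;> rw [h] <;> positivity
    have hv0 : 0 ≤ v := by rcases hv with h | h <;> rw [h] <;> positivity
    have hnorm : ‖((u : ℝ) : ℂ) * z * ((v : ℝ) : ℂ)‖ = u * ‖z‖ * v := by
      rw [norm_mul, norm_mul, Complex.norm_real, Complex.norm_real,
        Real.norm_of_nonneg hu0, Real.norm_of_nonneg hv0]
    rw [hnorm]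
    have hi1 : 0 < s1⁻¹ := inv_pos.mpr hs1
    have hi2 : 0 < s2⁻¹ := inv_pos.mpr hs2
    have huv : u * v ≤ (s1⁻¹ + s2⁻¹) * (s1 + s2) := by
      rcases hu with h | h <;> rcases hv with h' | h' <;> rw [h, h'] <;>
        nlinarith [mul_pos hi1 hs1, mul_pos hi1 hs2, mul_pos hi2 hs1, mul_pos hi2 hs2]
    have hstep : u * ‖z‖ * v ≤ u * v := by nlinarith [mul_nonneg hu0 hv0, norm_nonneg z]
    linarith
  have hAi : ∀ i : Fin 2, !![(s1⁻¹ : ℝ), 0; 0, (s2⁻¹ : ℝ)] i i = s1⁻¹ ∨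
      !![(s1⁻¹ : ℝ), 0; 0, (s2⁻¹ : ℝ)] i i = s2⁻¹ := by
    intro i; fin_cases i <;> simp
  have hBj : ∀ j : Fin 2, !![(s1 : ℝ), 0; 0, (s2 : ℝ)] j j = s1 ∨
      !![(s1 : ℝ), 0; 0, (s2 : ℝ)] j j = s2 := by
    intro j; fin_cases j <;> simp
  have hgoal : (T * W * S) i j =
      ((!![(s1⁻¹ : ℝ), 0; 0, (s2⁻¹ : ℝ)] i i : ℝ) : ℂ) * W i j *
        ((!![(s1 : ℝ), 0; 0, (s2 : ℝ)] j j : ℝ) : ℂ) := by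
    rw [hTdef, hSdef]
    fin_cases i <;> fin_cases j <;>
      simp only [Matrix.mul_apply, Fin.sum_univ_two, Matrix.cons_val', Matrix.cons_val_zero,
        Matrix.cons_val_one, Matrix.head_cons, Matrix.empty_val', Matrix.cons_val_fin_one,
        Matrix.head_fin_const, Matrix.of_apply, Fin.mk_zero, Fin.mk_one] <;> ring
  rw [hgoal]
  exact hbase _ _ _ (hAi i) (hBj j) (hb i j)
end

section
/- Let V, a be real numbers with V ≠ 0, V + a ≠ 0 and V − a ≠ 0. For all real f₊, f₋, set u = f₊ + f₋, g₊ = −f₊ + 2(u/2 + a·u/(2V)) and g₋ = −f₋ + 2(u/2 − a·u/(2V)). Then V·g₊²/(V + a) + V·g₋²/(V − a) = V·f₊²/(V + a) + V·f₋²/(V − a); that is, for the linear transport equation the ω = 2 relaxation exactly conserves the microscopic entropy Σ(f₊, f₋) = V f₊²/(V+a) + V f₋²/(V−a). -/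
/-- For the linear transport equation, the `ω = 2` relaxation of the D1Q2 scheme
exactly conserves the microscopic entropy `Σ(f₊, f₋) = V f₊²/(V+a) + V f₋²/(V−a)`. -/
theorem omega_two_conserves_microscopic_entropy_linear (V a : ℝ)
    (hV : V ≠ 0) (hVpa : V + a ≠ 0) (hVma : V - a ≠ 0) :
    ∀ fp fm : ℝ, ∀ u gp gm : ℝ,
      u = fp + fm →
      gp = -fp + 2 * (u / 2 + a * u / (2 * V)) →
      gm = -fm + 2 * (u / 2 - a * u / (2 * V)) →
      V * gp ^ 2 / (V + a) + V * gm ^ 2 / (V - a)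
        = V * fp ^ 2 / (V + a) + V * fm ^ 2 / (V - a) := by
  intro fp fm u gp gm hu hgp hgm
  subst hu hgp hgm
  field_simp
  ring
end

section
/- Let E be a real vector space, B : E → E → ℝ a bilinear map, L : E → ℝ a linear map, c ∈ ℝ, and define Σ(x) = B(x, x) + L(x) + c. Let W₀ be a linear subspace of E and e ∈ E a minimizer of Σ on the affine subspace e + W₀, i.e., Σ(e) ≤ Σ(e + w) for all w ∈ W₀. Then the reflection through e preserves Σ on e + W₀: Σ(e − w) = Σ(e + w) for every w ∈ W₀; equivalently, Σ(2e − f) = Σ(f) for every f ∈ e + W₀. -/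
/-- If a quadratic functional `Σ(x) = B(x,x) + L(x) + c` attains its minimum over
the affine subspace `e + W₀` at `e`, then the reflection through `e` preserves `Σ`
on `e + W₀`: `Σ(e − w) = Σ(e + w)` for all `w ∈ W₀`, equivalently `Σ(2e − f) = Σ(f)`
for every `f ∈ e + W₀`. -/
theorem reflection_through_minimizer_preserves_quadratic (E : Type*) [AddCommGroup E]
    [Module ℝ E] (B : E →ₗ[ℝ] E →ₗ[ℝ] ℝ) (L : E →ₗ[ℝ] ℝ) (c : ℝ)
    (Sig : E → ℝ) (hSig : ∀ x : E, Sig x = B x x + L x + c)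
    (W₀ : Submodule ℝ E) (e : E)
    (hmin : ∀ w ∈ W₀, Sig e ≤ Sig (e + w)) :
    (∀ w ∈ W₀, Sig (e - w) = Sig (e + w)) ∧
    (∀ f : E, f - e ∈ W₀ → Sig (2 • e - f) = Sig f) := by
  have key : ∀ w ∈ W₀, B e w + B w e + L w = 0 := by
    intro w hw
    set a : ℝ := B w w with ha
    set g : ℝ := B e w + B w e + L w with hg
    have H : ∀ t : ℝ, 0 ≤ t * g + t ^ 2 * a := by
      intro t
      have h := hmin (t • w) (W₀.smul_mem t hw)
      rw [hSig, hSig] at h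
      simp only [map_add, map_smul, LinearMap.add_apply, LinearMap.smul_apply,
        smul_eq_mul] at h
      simp only [hg, ha]
      nlinarith [h]
    have hs : (0:ℝ) < |a| + 1 := by positivity
    have h1 := H (-g / (|a| + 1))
    have h2 : a ≤ |a| := le_abs_self a
    have h3 : (0:ℝ) ≤ (-g / (|a| + 1)) * g + (-g / (|a| + 1)) ^ 2 * a := h1
    have h4 : 0 ≤ -g ^ 2 * (|a| + 1) + g ^ 2 * a := by
      have := mul_le_mul_of_nonneg_left (le_of_eq (rfl : ((0:ℝ)) = 0)) (le_of_lt hs)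
      have hne : (|a| + 1) ≠ 0 := ne_of_gt hs
      have := mul_nonneg h3 (le_of_lt (mul_pos hs hs))
      calc (0:ℝ) ≤ ((-g / (|a| + 1)) * g + (-g / (|a| + 1)) ^ 2 * a) * ((|a| + 1) * (|a| + 1)) := this
        _ = -g ^ 2 * (|a| + 1) + g ^ 2 * a := by field_simp
    nlinarith [sq_nonneg g, h4, h2]
  have part1 : ∀ w ∈ W₀, Sig (e - w) = Sig (e + w) := by
    intro w hw
    rw [hSig, hSig]
    have hk := key w hw
    simp only [map_add, map_sub, LinearMap.add_apply, LinearMap.sub_apply]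
    linarith
  refine ⟨part1, fun f hf => ?_⟩
  have h := part1 (f - e) hf
  have he1 : e - (f - e) = 2 • e - f := by abel
  have he2 : e + (f - e) = f := by abel
  rw [he1, he2] at h
  exact h
end

section
/- Let V > 0 and f > −V/4. The function F(p) = p·f − p²/4 − p³/(12V) attains its maximum over the interval (−V, +∞) at the point p* = V(√(1 + 4f/V) − 1), and the maximal value is F(p*) = (V²/6)·((1 + 4f/V)^{3/2} − 6f/V − 1). Hence the kinetic entropy s₊ for Burgers' equation is the Legendre–Fenchel transform of the dual kinetic entropy s₊*(p) = p²/4 + p³/(12V) restricted to the region where s₊* is convex. -/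
/-- The kinetic entropy `s₊` for Burgers' equation is the Legendre–Fenchel
transform of the dual kinetic entropy `s₊*(p) = p²/4 + p³/(12V)` on the region
`p > −V` where `s₊*` is convex: for `f > −V/4`, the function
`F(p) = pf − p²/4 − p³/(12V)` attains its maximum over `(−V, +∞)` at
`p* = V(√(1 + 4f/V) − 1)`, with maximal value
`F(p*) = (V²/6)((1 + 4f/V)^{3/2} − 6f/V − 1)`. -/
theorem burgers_kinetic_entropy_legendre_transform (V f : ℝ) (hV : 0 < V)
    (hf : -V / 4 < f)
    (F : ℝ → ℝ) (hF : ∀ p : ℝ, F p = p * f - p ^ 2 / 4 - p ^ 3 / (12 * V))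
    (pstar : ℝ) (hpstar : pstar = V * (Real.sqrt (1 + 4 * f / V) - 1)) :
    pstar ∈ Set.Ioi (-V) ∧ (∀ p ∈ Set.Ioi (-V), F p ≤ F pstar) ∧
    F pstar = V ^ 2 / 6 * ((1 + 4 * f / V) ^ ((3 : ℝ) / 2) - 6 * f / V - 1) := by
  have hVne : V ≠ 0 := hV.ne'
  have hx : (0:ℝ) < 1 + 4 * f / V := by
    have h1 : 0 < (V + 4 * f) / V := div_pos (by linarith) hV
    have h2 : (V + 4 * f) / V = 1 + 4 * f / V := by field_simp
    linarith [h2 ▸ h1]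
  set s : ℝ := Real.sqrt (1 + 4 * f / V) with hs
  have hs0 : 0 < s := Real.sqrt_pos.mpr hx
  have hs2 : s ^ 2 = 1 + 4 * f / V := Real.sq_sqrt hx.le
  have hfe : f = (V * s ^ 2 - V) / 4 := by
    have : V * s ^ 2 = V + 4 * f := by
      rw [hs2]; field_simp
    linarith
  have h32 : (1 + 4 * f / V) ^ ((3 : ℝ) / 2) = s ^ 3 := by
    have h1 : (1 + 4 * f / V) ^ ((3 : ℝ) / 2)
        = ((1 + 4 * f / V) ^ ((1 : ℝ) / 2)) ^ (3 : ℕ) := by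
      rw [← Real.rpow_natCast _ 3, ← Real.rpow_mul hx.le]
      norm_num
    rw [h1, ← Real.sqrt_eq_rpow]
  refine ⟨?_, ?_, ?_⟩
  · have : -V < V * (s - 1) := by nlinarith
    simpa [hpstar] using this
  · intro p hp
    have hp' : -V < p := hp
    have key : F pstar - F p = (p - pstar) ^ 2 * (p + V * (1 + 2 * s)) / (12 * V) := by
      rw [hF p, hF pstar, hpstar, hfe]
      field_simp
      ring
    have hpos : 0 ≤ (p - pstar) ^ 2 * (p + V * (1 + 2 * s)) / (12 * V) := by
      apply div_nonneg _ (by linarith)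
      apply mul_nonneg (sq_nonneg _)
      nlinarith
    linarith [key ▸ hpos]
  · rw [hF, hpstar, h32, hfe]
    field_simp
    ring
end

section
/- Let V, g, p₁, p₂ be real numbers with g ≠ 0, V ≠ 0 and V + p₂ ≠ 0. Define f¹ = (V + p₂)(2p₁ + p₂²)/(4gV) and f² = ((2p₁ + p₂²)² + 4p₂(V + p₂)(2p₁ + p₂²))/(16gV), which are the partial derivatives with respect to p₁ and p₂ of the dual kinetic entropy s₊*(p₁, p₂) = (V + p₂)(2p₁ + p₂²)²/(16gV). Then: (i) p₁ = (4Vg f¹ − V p₂² − p₂³)/(2(V + p₂)); and (ii) p₂ satisfies the cubic equation Vg(f¹)² + f¹·p₂³ − V²·f² + (2Vf¹ − f²)·p₂² + (V²f¹ − 2Vf²)·p₂ = 0. -/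
/-- Inversion of the gradient map of the dual kinetic entropy
`s₊*(p₁, p₂) = (V + p₂)(2p₁ + p₂²)²/(16gV)` for the shallow water system:
given `f¹ = ∂s₊*/∂p₁` and `f² = ∂s₊*/∂p₂`, the variable `p₁` is determined linearly
from `p₂`, and `p₂` satisfies a cubic equation with coefficients in `f¹, f²`. -/
theorem shallow_water_dual_entropy_inversion (V g p₁ p₂ : ℝ)
    (hg : g ≠ 0) (hV : V ≠ 0) (hVp : V + p₂ ≠ 0)
    (f₁ f₂ : ℝ)
    (hf₁ : f₁ = (V + p₂) * (2 * p₁ + p₂ ^ 2) / (4 * g * V))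
    (hf₂ : f₂ = ((2 * p₁ + p₂ ^ 2) ^ 2 + 4 * p₂ * (V + p₂) * (2 * p₁ + p₂ ^ 2))
      / (16 * g * V)) :
    p₁ = (4 * V * g * f₁ - V * p₂ ^ 2 - p₂ ^ 3) / (2 * (V + p₂)) ∧
    V * g * f₁ ^ 2 + f₁ * p₂ ^ 3 - V ^ 2 * f₂ + (2 * V * f₁ - f₂) * p₂ ^ 2
      + (V ^ 2 * f₁ - 2 * V * f₂) * p₂ = 0 := by
  subst hf₁ hf₂
  constructor <;> field_simp <;> ring
end
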